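/- Let k ≥ 2 be an integer and assume that t_3(k+1, 3) = 4/k² (Turán's conjecture for this k). Then for every real number γ with 1 ≤ γ < (k+1)/2, liminf_{q→∞} t_3(q, ⌈q/γ⌉) ≥ 4/k². -/

import Mathlib

open Filter

/-- An r-uniform hypergraph `G` on vertex set `Fin n` has the (q,p)-property if every
q-element vertex subset `A` contains a p-element subset `B` such that every
r-element subset of `B` is an edge of `G`. -/
def HasLocalProperty {n : ℕ} (G : Finset (Finset (Fin n))) (r q p : ℕ) : Prop :=
  ∀ A : Finset (Fin n), A.card = q →
    ∃ B ⊆ A, B.card = p ∧ ∀ e ⊆ B, e.card = r → e ∈ G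

/-- `minEdges r n q p` = T_r(n,q,p): the minimum number of edges of an n-vertex
r-uniform hypergraph having the (q,p)-property. -/
noncomputable def minEdges (r n q p : ℕ) : ℕ :=
  sInf {m | ∃ G : Finset (Finset (Fin n)), (∀ e ∈ G, e.card = r) ∧
    HasLocalProperty G r q p ∧ G.card = m}

/-- `tDensity r q p` = t_r(q,p) = lim_{n→∞} T_r(n,q,p)/C(n,r), which equals the
supremum since the sequence is nondecreasing and bounded. -/
noncomputable def tDensity (r q p : ℕ) : ℝ :=
  ⨆ n : ℕ, (minEdges r n q p : ℝ) / (n.choose r)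

open Finset

lemma descfact_ratio (m a n : ℕ) :
    (a - m)^m * n.descFactorial m ≤ a.descFactorial m * n^m := by
  induction m with
  | zero => simp
  | succ m ih =>
    rw [Nat.descFactorial_succ, Nat.descFactorial_succ, pow_succ]
    have h1 : (a - (m+1))^m ≤ (a - m)^m :=
      Nat.pow_le_pow_left (Nat.sub_le_sub_left (Nat.le_succ m) a) m
    calc (a - (m+1))^m * (a - (m+1)) * ((n - m) * n.descFactorial m)
        ≤ (a - m)^m * (a - m) * (n * n.descFactorial m) := by
          refine Nat.mul_le_mul (Nat.mul_le_mul h1 ?_) (Nat.mul_le_mul ?_ le_rfl)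
          · exact Nat.sub_le_sub_left (Nat.le_succ m) a
          · exact Nat.sub_le n m
      _ = ((a - m)^m * n.descFactorial m) * ((a - m) * n) := by ring
      _ ≤ (a.descFactorial m * n^m) * ((a - m) * n) := Nat.mul_le_mul ih le_rfl
      _ = (a - m) * a.descFactorial m * (n^m * n) := by ring

lemma choose_ratio (m a n : ℕ) :
    (a - m)^m * n.choose m ≤ a.choose m * n^m := by
  have h := descfact_ratio m a n
  rw [Nat.descFactorial_eq_factorial_mul_choose, Nat.descFactorial_eq_factorial_mul_choose] at h
  have hm : 0 < m.factorial := Nat.factorial_pos m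
  refine Nat.le_of_mul_le_mul_left ?_ hm
  calc m.factorial * ((a-m)^m * n.choose m) = (a-m)^m * (m.factorial * n.choose m) := by ring
    _ ≤ m.factorial * a.choose m * n^m := h
    _ = m.factorial * (a.choose m * n^m) := by ring

open scoped Classical in
lemma box_theorem (r : ℕ) : ∀ (m : ℕ) (c : ℝ), 0 < c → ∃ n₀ : ℕ, ∀ n, n₀ ≤ n →
    ∀ F : Finset (Fin r → Fin n), c * (n:ℝ)^r ≤ F.card →
    ∃ W : Fin r → Finset (Fin n), (∀ i, (W i).card = m) ∧
      ∀ f : Fin r → Fin n, (∀ i, f i ∈ W i) → f ∈ F := by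
  induction r with
  | zero =>
    intro m c hc
    refine ⟨0, fun n _ F hF => ?_⟩
    have hFne : F.Nonempty := by
      rw [← Finset.card_pos]
      by_contra hcon
      push_neg at hcon
      have h0 : F.card = 0 := by omega
      rw [h0] at hF
      simp only [Nat.cast_zero, pow_zero, mul_one] at hF
      linarith
    obtain ⟨g, hg⟩ := hFne
    refine ⟨fun i => i.elim0, fun i => i.elim0, fun f _ => ?_⟩
    have : f = g := funext fun i => i.elim0
    rwa [this]
  | succ r ih =>
    intro m c hc
    set c' : ℝ := (c/2) * (c/4)^m with hc'def
    have hc' : 0 < c' := by positivity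
    obtain ⟨n₁, hn₁⟩ := ih m c' hc'
    refine ⟨n₁ + (m+1) + ⌈4*((m:ℝ)+1)/c⌉₊, fun n hn F hF => ?_⟩
    have hnn₁ : n₁ ≤ n := by omega
    have hnm : m + 1 ≤ n := by omega
    have hn0 : 0 < n := by omega
    have hnR : (0:ℝ) < n := by exact_mod_cast hn0
    have hcn : (m:ℝ) + 1 ≤ c/4 * n := by
      have h1 : (⌈4*((m:ℝ)+1)/c⌉₊ : ℝ) ≤ n := by
        have : ⌈4*((m:ℝ)+1)/c⌉₊ ≤ n := by omega
        exact_mod_cast this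
      have h3 : 4*((m:ℝ)+1)/c ≤ n := (Nat.le_ceil _).trans h1
      calc (m:ℝ) + 1 = c/4 * (4*((m:ℝ)+1)/c) := by field_simp
        _ ≤ c/4 * n := by
            refine mul_le_mul_of_nonneg_left h3 (by positivity)
    -- the sets D g
    set D : (Fin r → Fin n) → Finset (Fin n) :=
      fun g => Finset.univ.filter (fun x => Fin.cons x g ∈ F) with hD
    -- sum of |D g| equals |F|
    have sumD : ∑ g : Fin r → Fin n, (D g).card = F.card := by
      have hpair : (Finset.univ.filter
          (fun p : Fin n × (Fin r → Fin n) => Fin.cons p.1 p.2 ∈ F)).card = F.card := by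
        refine card_nbij' (fun p => Fin.cons p.1 p.2) (fun f => (f 0, Fin.tail f)) ?_ ?_ ?_ ?_
        · intro p hp; exact (mem_filter.1 hp).2
        · intro f hf
          refine mem_filter.2 ⟨mem_univ _, ?_⟩
          simpa only [Fin.cons_self_tail, Finset.mem_coe] using hf
        · intro p hp
          simp [Fin.cons_zero, Fin.tail_cons]
        · intro f hf
          simp [Fin.cons_self_tail]
      rw [← hpair, card_filter, Fintype.sum_prod_type, Finset.sum_comm]
      refine Finset.sum_congr rfl fun g _ => ?_
      rw [hD, card_filter]
    -- the set of rich g's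
    set T : Finset (Fin r → Fin n) :=
      Finset.univ.filter (fun g => c/2 * n ≤ ((D g).card : ℝ)) with hT
    have hTbound : c/2 * (n:ℝ)^r ≤ T.card := by
      have h1 : (c:ℝ) * n^(r+1) ≤ ∑ g : Fin r → Fin n, ((D g).card : ℝ) := by
        rw [← Nat.cast_sum, sumD]; exact hF
      have h2 : ∑ g ∈ T, ((D g).card : ℝ) ≤ T.card * n := by
        rw [← nsmul_eq_mul]
        refine Finset.sum_le_card_nsmul T _ ((n : ℝ)) fun g _ => ?_
        exact_mod_cast (card_filter_le _ _).trans (le_of_eq (by rw [card_univ, Fintype.card_fin]))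
      have h3 : ∑ g ∈ Finset.univ \ T, ((D g).card : ℝ) ≤ (n:ℝ)^r * (c/2 * n) := by
        calc ∑ g ∈ Finset.univ \ T, ((D g).card : ℝ)
            ≤ ∑ _g ∈ Finset.univ \ T, (c/2 * (n:ℝ)) := by
              refine Finset.sum_le_sum fun g hg => ?_
              rw [Finset.mem_sdiff, hT, mem_filter] at hg
              have := hg.2
              push_neg at this
              exact le_of_lt (this (mem_univ g))
          _ = (Finset.univ \ T).card * (c/2 * n) := by rw [Finset.sum_const, nsmul_eq_mul]
          _ ≤ (n:ℝ)^r * (c/2 * n) := by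
              refine mul_le_mul_of_nonneg_right ?_ (by positivity)
              have : (Finset.univ \ T).card ≤ Fintype.card (Fin r → Fin n) :=
                (card_le_card (subset_univ _)).trans (le_of_eq card_univ)
              rw [Fintype.card_fun, Fintype.card_fin, Fintype.card_fin] at this
              exact_mod_cast this
      have h4 : ∑ g : Fin r → Fin n, ((D g).card : ℝ)
          = ∑ g ∈ T, ((D g).card : ℝ) + ∑ g ∈ Finset.univ \ T, ((D g).card : ℝ) := by
        rw [← Finset.sum_sdiff (subset_univ T)]; ring
      have h5 : (c:ℝ) * n^(r+1) ≤ T.card * n + (n:ℝ)^r * (c/2 * n) := by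
        rw [h4] at h1; linarith
      have h6 : (c/2) * (n:ℝ)^r * n ≤ (T.card : ℝ) * n := by
        have : (c:ℝ) * n^(r+1) = c * n^r * n := by ring
        nlinarith [pow_pos hnR r]
      exact le_of_mul_le_mul_right (by linarith) hnR
    set d₀ : ℕ := ⌈c/2 * (n:ℝ)⌉₊ with hd₀
    have hd₀le : ∀ g ∈ T, d₀ ≤ (D g).card := by
      intro g hg
      rw [hT, mem_filter] at hg
      exact Nat.ceil_le.2 hg.2
    have hmd₀ : m < d₀ := by
      have h1 : (m:ℝ) < c/2 * n := by
        have : c/4 * (n:ℝ) ≤ c/2 * n := by nlinarith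
        linarith
      have h2 : (m:ℝ) < d₀ := lt_of_lt_of_le h1 (Nat.le_ceil _)
      exact_mod_cast h2
    have hd₀m : c/4 * (n:ℝ) ≤ ((d₀ - m : ℕ) : ℝ) := by
      rw [Nat.cast_sub (le_of_lt hmd₀)]
      have h1 : c/2 * (n:ℝ) ≤ d₀ := Nat.le_ceil _
      have h2 : (m:ℝ) ≤ c/4 * n - 1 := by linarith
      nlinarith
    -- pigeonhole over M
    have hsum2 : T.card * d₀.choose m ≤
        ∑ M ∈ (Finset.univ.powersetCard m : Finset (Finset (Fin n))),
          (T.filter (fun g => M ⊆ D g)).card := by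
      have swap : ∑ M ∈ (Finset.univ.powersetCard m : Finset (Finset (Fin n))),
          (T.filter (fun g => M ⊆ D g)).card
          = ∑ g ∈ T, ((D g).powersetCard m).card := by
        have e1 : ∀ M ∈ (Finset.univ.powersetCard m : Finset (Finset (Fin n))),
            (T.filter (fun g => M ⊆ D g)).card = ∑ g ∈ T, if M ⊆ D g then 1 else 0 :=
          fun M _ => card_filter _ _
        rw [Finset.sum_congr rfl e1, Finset.sum_comm]
        refine Finset.sum_congr rfl fun g _ => ?_
        rw [← card_filter]
        congr 1
        ext M
        simp only [mem_filter, mem_powersetCard, subset_univ, true_and]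
        tauto
      rw [swap]
      calc T.card * d₀.choose m = T.card • d₀.choose m := by rw [smul_eq_mul]
        _ ≤ ∑ g ∈ T, ((D g).powersetCard m).card := by
            refine Finset.card_nsmul_le_sum T _ _ fun g hg => ?_
            rw [card_powersetCard]
            exact Nat.choose_le_choose m (hd₀le g hg)
    have hPne : ((Finset.univ.powersetCard m : Finset (Finset (Fin n)))).Nonempty := by
      rw [← Finset.card_pos, card_powersetCard, card_univ, Fintype.card_fin]
      exact Nat.choose_pos (by omega)
    obtain ⟨M₀, hM₀mem, hM₀⟩ := Finset.exists_le_of_sum_le (f := fun _ => T.card * d₀.choose m)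
      (g := fun M => (T.filter (fun g => M ⊆ D g)).card * n.choose m) hPne
      (by
        rw [Finset.sum_const, smul_eq_mul, ← Finset.sum_mul, card_powersetCard, card_univ,
          Fintype.card_fin, mul_comm (n.choose m) _]
        exact Nat.mul_le_mul_right _ hsum2)
    set cnt : ℕ := (T.filter (fun g => M₀ ⊆ D g)).card with hcnt
    have hchoosepos : 0 < n.choose m := Nat.choose_pos (by omega)
    have hkey : c' * (n:ℝ)^r ≤ cnt := by
      have hratio : ((d₀ - m : ℕ):ℝ)^m * (n.choose m : ℝ) ≤ (d₀.choose m : ℝ) * (n:ℝ)^m := by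
        exact_mod_cast choose_ratio m d₀ n
      have h1 : ((c/4)*(n:ℝ))^m * (n.choose m:ℝ) ≤ (d₀.choose m:ℝ) * (n:ℝ)^m := by
        refine le_trans ?_ hratio
        refine mul_le_mul_of_nonneg_right (pow_le_pow_left₀ (by positivity) hd₀m m) (by positivity)
      have h2 : (T.card:ℝ) * (d₀.choose m) ≤ (cnt:ℝ) * (n.choose m) := by exact_mod_cast hM₀
      have h3 : (c/2) * (n:ℝ)^r * (((c/4)*(n:ℝ))^m * (n.choose m:ℝ))
          ≤ (T.card:ℝ) * ((d₀.choose m:ℝ) * (n:ℝ)^m) := by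
        calc (c/2) * (n:ℝ)^r * (((c/4)*(n:ℝ))^m * (n.choose m:ℝ))
            ≤ (c/2)*(n:ℝ)^r * ((d₀.choose m:ℝ)*(n:ℝ)^m) :=
              mul_le_mul_of_nonneg_left h1 (by positivity)
          _ ≤ (T.card:ℝ) * ((d₀.choose m:ℝ)*(n:ℝ)^m) :=
              mul_le_mul_of_nonneg_right hTbound (by positivity)
      have h4 : (T.card:ℝ) * ((d₀.choose m:ℝ) * (n:ℝ)^m)
          ≤ ((cnt:ℝ) * (n.choose m)) * (n:ℝ)^m := by
        calc (T.card:ℝ) * ((d₀.choose m:ℝ) * (n:ℝ)^m)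
            = ((T.card:ℝ) * (d₀.choose m:ℝ)) * (n:ℝ)^m := by ring
          _ ≤ ((cnt:ℝ) * (n.choose m)) * (n:ℝ)^m :=
              mul_le_mul_of_nonneg_right h2 (by positivity)
      have h5 : c' * (n:ℝ)^r * ((n.choose m:ℝ) * (n:ℝ)^m)
          ≤ (cnt:ℝ) * ((n.choose m:ℝ) * (n:ℝ)^m) := by
        have heq : c' * (n:ℝ)^r * ((n.choose m:ℝ) * (n:ℝ)^m)
            = (c/2) * (n:ℝ)^r * (((c/4)*(n:ℝ))^m * (n.choose m:ℝ)) := by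
          rw [hc'def, mul_pow]; ring
        rw [heq]
        calc (c/2) * (n:ℝ)^r * (((c/4)*(n:ℝ))^m * (n.choose m:ℝ))
            ≤ (T.card:ℝ) * ((d₀.choose m:ℝ) * (n:ℝ)^m) := h3
          _ ≤ ((cnt:ℝ) * (n.choose m)) * (n:ℝ)^m := h4
          _ = (cnt:ℝ) * ((n.choose m:ℝ) * (n:ℝ)^m) := by ring
      have hpos : (0:ℝ) < (n.choose m:ℝ) * (n:ℝ)^m := by positivity
      exact le_of_mul_le_mul_right h5 hpos
    set G' : Finset (Fin r → Fin n) :=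
      Finset.univ.filter (fun g => ∀ x ∈ M₀, Fin.cons x g ∈ F) with hG'
    have hsubG' : T.filter (fun g => M₀ ⊆ D g) ⊆ G' := by
      intro g hg
      rw [mem_filter] at hg
      exact mem_filter.2 ⟨mem_univ _, fun x hx => (mem_filter.1 (hg.2 hx)).2⟩
    have hG'card : c' * (n:ℝ)^r ≤ (G'.card : ℝ) :=
      le_trans hkey (by exact_mod_cast card_le_card hsubG')
    obtain ⟨W', hW'card, hW'mem⟩ := hn₁ n hnn₁ G' hG'card
    have hM₀card : M₀.card = m := (mem_powersetCard.1 hM₀mem).2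
    refine ⟨Fin.cons M₀ W', ?_, ?_⟩
    · intro i
      refine Fin.cases ?_ ?_ i
      · rw [Fin.cons_zero]; exact hM₀card
      · intro j; rw [Fin.cons_succ]; exact hW'card j
    · intro f hf
      have h0 : f 0 ∈ M₀ := by have := hf 0; rwa [Fin.cons_zero] at this
      have htail : ∀ i, Fin.tail f i ∈ W' i := fun i => by
        have := hf i.succ; rwa [Fin.cons_succ] at this
      have hG'f : Fin.tail f ∈ G' := hW'mem _ htail
      have hfin := (mem_filter.1 hG'f).2 (f 0) h0
      rwa [Fin.cons_self_tail] at hfin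


lemma complete_mem (n q p : ℕ) (hpq : p ≤ q) :
    n.choose 3 ∈ {m | ∃ G : Finset (Finset (Fin n)), (∀ e ∈ G, e.card = 3) ∧
      HasLocalProperty G 3 q p ∧ G.card = m} := by
  refine ⟨Finset.univ.powersetCard 3, ?_, ?_, ?_⟩
  · intro e he; exact (mem_powersetCard.1 he).2
  · intro A hA
    obtain ⟨B, hBA, hBcard⟩ := exists_subset_card_eq (hA ▸ hpq)
    exact ⟨B, hBA, hBcard, fun e _ hecard => mem_powersetCard.2 ⟨subset_univ _, hecard⟩⟩
  · rw [card_powersetCard, card_univ, Fintype.card_fin]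

lemma minEdges_le_choose {n q p : ℕ} (hpq : p ≤ q) : minEdges 3 n q p ≤ n.choose 3 :=
  Nat.sInf_le (complete_mem n q p hpq)

lemma exists_minimizer (n q p : ℕ) (hpq : p ≤ q) :
    ∃ G : Finset (Finset (Fin n)), (∀ e ∈ G, e.card = 3) ∧
      HasLocalProperty G 3 q p ∧ G.card = minEdges 3 n q p :=
  Nat.sInf_mem (⟨_, complete_mem n q p hpq⟩ :
    {m | ∃ G : Finset (Finset (Fin n)), (∀ e ∈ G, e.card = 3) ∧
      HasLocalProperty G 3 q p ∧ G.card = m}.Nonempty)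

lemma minEdges_le_card {n q p : ℕ} (G : Finset (Finset (Fin n)))
    (hG3 : ∀ e ∈ G, e.card = 3) (hGp : HasLocalProperty G 3 q p) :
    minEdges 3 n q p ≤ G.card :=
  Nat.sInf_le ⟨G, hG3, hGp, rfl⟩

open scoped Classical in
lemma induced_bound {n N k : ℕ} (G : Finset (Finset (Fin n)))
    (S : Finset (Fin n)) (hScard : S.card = N)
    (h : ∀ A ⊆ S, A.card = k+1 → ∃ B, B ⊆ A ∧ B.card = 3 ∧ B ∈ G) :
    minEdges 3 N (k+1) 3 ≤ (G.filter (fun e => e ⊆ S)).card := by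
  set ψ : Fin N → Fin n := fun i => ((S.orderIsoOfFin hScard i : S) : Fin n) with hψ
  have ψinj : Function.Injective ψ := fun a b hab =>
    (S.orderIsoOfFin hScard).injective (Subtype.ext hab)
  have himgsub : (Finset.univ.image ψ) ⊆ S := by
    intro x hx
    obtain ⟨i, _, rfl⟩ := mem_image.1 hx
    exact (S.orderIsoOfFin hScard i).2
  have himg : Finset.univ.image ψ = S := by
    refine eq_of_subset_of_card_le himgsub ?_
    rw [card_image_of_injective _ ψinj, card_univ, Fintype.card_fin, hScard]
  set H : Finset (Finset (Fin N)) :=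
    (Finset.univ.powersetCard 3).filter (fun B => B.image ψ ∈ G) with hH
  have hprop : HasLocalProperty H 3 (k+1) 3 := by
    intro A₀ hA₀
    have hAsub : A₀.image ψ ⊆ S := himg ▸ image_subset_image (subset_univ A₀)
    have hAcard : (A₀.image ψ).card = k+1 := by
      rw [card_image_of_injective _ ψinj, hA₀]
    obtain ⟨B, hBA, hB3, hBG⟩ := h (A₀.image ψ) hAsub hAcard
    set B₀ : Finset (Fin N) := Finset.univ.filter (fun i => ψ i ∈ B) with hB₀
    have hB₀A₀ : B₀ ⊆ A₀ := by
      intro i hi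
      rw [hB₀, mem_filter] at hi
      have := hBA hi.2
      obtain ⟨a, haA, ha⟩ := mem_image.1 this
      rwa [ψinj ha] at haA
    have hB₀img : B₀.image ψ = B := by
      apply Finset.Subset.antisymm
      · intro x hx
        obtain ⟨i, hi, rfl⟩ := mem_image.1 hx
        exact (mem_filter.1 hi).2
      · intro x hx
        obtain ⟨a, _, rfl⟩ := mem_image.1 (hBA hx)
        exact mem_image.2 ⟨a, mem_filter.2 ⟨mem_univ a, hx⟩, rfl⟩
    have hB₀card : B₀.card = 3 := by
      rw [← hB3, ← hB₀img, card_image_of_injective _ ψinj]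
    have hB₀H : B₀ ∈ H := by
      rw [hH, mem_filter, mem_powersetCard]
      exact ⟨⟨subset_univ _, hB₀card⟩, hB₀img ▸ hBG⟩
    refine ⟨B₀, hB₀A₀, hB₀card, fun e he he3 => ?_⟩
    have : e = B₀ := eq_of_subset_of_card_le he (by omega)
    rwa [this]
  have hcard : H.card ≤ (G.filter (fun e => e ⊆ S)).card := by
    refine card_le_card_of_injOn (fun B => B.image ψ) ?_ ?_
    · intro B hB
      rw [hH, Finset.mem_coe, mem_filter] at hB
      refine mem_filter.2 ⟨hB.2, ?_⟩
      exact himg ▸ image_subset_image (subset_univ B)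
    · intro B _ B' _ hBB'
      exact Finset.image_injective ψinj hBB'
  refine le_trans (minEdges_le_card H ?_ hprop) hcard
  intro e he
  exact (mem_powersetCard.1 (mem_filter.1 he).1).2

open scoped Classical in
lemma card_supersets' {n N : ℕ} (e : Finset (Fin n)) (hN : e.card ≤ N) :
    ((Finset.univ.powersetCard N : Finset (Finset (Fin n))).filter (fun S => e ⊆ S)).card
      = (n - e.card).choose (N - e.card) := by
  have key : ((Finset.univ.powersetCard N : Finset (Finset (Fin n))).filter (fun S => e ⊆ S)).card
      = ((Finset.univ \ e).powersetCard (N - e.card)).card := by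
    refine card_nbij' (fun S => S \ e) (fun T => T ∪ e) ?_ ?_ ?_ ?_
    · intro S hS
      simp only [Finset.mem_coe, mem_filter, mem_powersetCard] at hS
      obtain ⟨⟨hsub, hcard⟩, heS⟩ := hS
      rw [Finset.mem_coe, mem_powersetCard]
      exact ⟨sdiff_subset_sdiff hsub le_rfl, by rw [card_sdiff_of_subset heS, hcard]⟩
    · intro T hT
      rw [Finset.mem_coe, mem_powersetCard] at hT
      obtain ⟨hsub, hcard⟩ := hT
      have hdisj : Disjoint T e := by
        refine disjoint_left.2 fun a haT hae => ?_
        have := hsub haT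
        simp [hae] at this
      simp only [Finset.mem_coe, mem_filter, mem_powersetCard]
      refine ⟨⟨subset_univ _, ?_⟩, subset_union_right⟩
      rw [card_union_of_disjoint hdisj, hcard]
      omega
    · intro S hS
      simp only [Finset.mem_coe, mem_filter] at hS
      exact sdiff_union_of_subset hS.2
    · intro T hT
      rw [Finset.mem_coe, mem_powersetCard] at hT
      have hdisj : Disjoint T e := by
        refine disjoint_left.2 fun a haT hae => ?_
        have := hT.1 haT
        simp [hae] at this
      simp only []
      rw [union_sdiff_right, sdiff_eq_self_of_disjoint hdisj]
  rw [key, card_powersetCard, card_sdiff_of_subset (subset_univ e), card_univ, Fintype.card_fin]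

open scoped Classical in
lemma sum_internal' {n N : ℕ} (G : Finset (Finset (Fin n))) (hG : ∀ e ∈ G, e.card = 3)
    (h3N : 3 ≤ N) :
    ∑ S ∈ (Finset.univ.powersetCard N : Finset (Finset (Fin n))),
        (G.filter (fun e => e ⊆ S)).card
      = G.card * (n - 3).choose (N - 3) := by
  have h1 : ∀ S ∈ (Finset.univ.powersetCard N : Finset (Finset (Fin n))),
      (G.filter (fun e => e ⊆ S)).card = ∑ e ∈ G, if e ⊆ S then 1 else 0 :=
    fun S _ => card_filter _ _
  rw [Finset.sum_congr rfl h1, Finset.sum_comm]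
  have h2 : ∀ e ∈ G, ∑ S ∈ (Finset.univ.powersetCard N : Finset (Finset (Fin n))),
      (if e ⊆ S then 1 else 0) = (n - 3).choose (N - 3) := by
    intro e he
    rw [← card_filter]
    have := card_supersets' (n := n) (N := N) e (by rw [hG e he]; exact h3N)
    rw [hG e he] at this
    convert this using 2
  rw [Finset.sum_congr rfl h2, Finset.sum_const, smul_eq_mul]

open scoped Classical in
lemma sup_bound {n N k : ℕ} (hk2 : 2 ≤ k) (hkN : k+1 ≤ N) (hNn : N ≤ n)
    (G : Finset (Finset (Fin n))) (hG3 : ∀ e ∈ G, e.card = 3) :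
    minEdges 3 N (k+1) 3 * n.choose N ≤
      G.card * (n-3).choose (N-3) +
      minEdges 3 N (k+1) 3 *
        ((((Finset.univ.powersetCard (k+1) : Finset (Finset (Fin n)))).filter
          (fun A => ∀ B ⊆ A, B.card = 3 → B ∉ G)).card * (n-(k+1)).choose (N-(k+1))) := by
  set E := minEdges 3 N (k+1) 3 with hE
  set P : Finset (Finset (Fin n)) := Finset.univ.powersetCard N with hP
  set K : Finset (Finset (Fin n)) := (Finset.univ.powersetCard (k+1)).filter
    (fun A => ∀ B ⊆ A, B.card = 3 → B ∉ G) with hK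
  set bad : Finset (Finset (Fin n)) := P.filter (fun S => ∃ A ∈ K, A ⊆ S) with hbad
  set good : Finset (Finset (Fin n)) := P.filter (fun S => ¬ ∃ A ∈ K, A ⊆ S) with hgood
  have hsplit : good.card + bad.card = P.card := by
    rw [hgood, hbad]
    rw [add_comm]
    exact card_filter_add_card_filter_not (fun S => ∃ A ∈ K, A ⊆ S)
  have hgoodbound : ∀ S ∈ good, E ≤ (G.filter (fun e => e ⊆ S)).card := by
    intro S hS
    rw [hgood, mem_filter] at hS
    obtain ⟨hSP, hSgood⟩ := hS
    rw [hP, mem_powersetCard] at hSP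
    refine induced_bound G S hSP.2 ?_
    intro A hAS hAcard
    by_contra hcon
    push_neg at hcon
    refine hSgood ⟨A, ?_, hAS⟩
    rw [hK, mem_filter, mem_powersetCard]
    refine ⟨⟨subset_univ _, hAcard⟩, fun B hBA hB3 hBG => ?_⟩
    exact (hcon B hBA hB3) hBG
  have hsum : E * good.card ≤ G.card * (n-3).choose (N-3) := by
    calc E * good.card = good.card * E := by ring
      _ = good.card • E := by rw [smul_eq_mul]
      _ ≤ ∑ S ∈ good, (G.filter (fun e => e ⊆ S)).card :=
          Finset.card_nsmul_le_sum good _ E hgoodbound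
      _ ≤ ∑ S ∈ P, (G.filter (fun e => e ⊆ S)).card :=
          Finset.sum_le_sum_of_subset (filter_subset _ _)
      _ = G.card * (n-3).choose (N-3) := sum_internal' G hG3 (by omega)
  have hbadbound : bad.card ≤ K.card * (n-(k+1)).choose (N-(k+1)) := by
    have hsub : bad ⊆ K.biUnion (fun A => P.filter (fun S => A ⊆ S)) := by
      intro S hS
      rw [hbad, mem_filter] at hS
      obtain ⟨hSP, A, hAK, hAS⟩ := hS
      exact mem_biUnion.2 ⟨A, hAK, mem_filter.2 ⟨hSP, hAS⟩⟩
    calc bad.card ≤ (K.biUnion (fun A => P.filter (fun S => A ⊆ S))).card :=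
          card_le_card hsub
      _ ≤ ∑ A ∈ K, (P.filter (fun S => A ⊆ S)).card := card_biUnion_le
      _ = ∑ A ∈ K, (n-(k+1)).choose (N-(k+1)) := by
          refine Finset.sum_congr rfl fun A hA => ?_
          rw [hK, mem_filter, mem_powersetCard] at hA
          have := card_supersets' (N := N) A (by rw [hA.1.2]; omega)
          rw [hA.1.2] at this
          convert this using 2
      _ = K.card * (n-(k+1)).choose (N-(k+1)) := by rw [Finset.sum_const, smul_eq_mul]
  have hPcard : P.card = n.choose N := by
    rw [hP, card_powersetCard, card_univ, Fintype.card_fin]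
  calc E * n.choose N = E * good.card + E * bad.card := by
        rw [← Nat.mul_add, hsplit, hPcard]
    _ ≤ G.card * (n-3).choose (N-3) + E * (K.card * (n-(k+1)).choose (N-(k+1))) := by
        refine Nat.add_le_add hsum ?_
        exact Nat.mul_le_mul_left E hbadbound

open scoped Classical in
lemma orderIso_image_univ {n N : ℕ} (A : Finset (Fin n)) (h : A.card = N) :
    Finset.univ.image (fun i => ((A.orderIsoOfFin h i : A) : Fin n)) = A := by
  refine eq_of_subset_of_card_le ?_ ?_
  · intro x hx
    obtain ⟨i, _, rfl⟩ := mem_image.1 hx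
    exact (A.orderIsoOfFin h i).2
  · rw [card_image_of_injective _ (fun a b hab => (A.orderIsoOfFin h).injective (Subtype.ext hab)),
      card_univ, Fintype.card_fin, h]

open scoped Classical in
lemma perq (k : ℕ) (hk : 2 ≤ k) (hturan : tDensity 3 (k+1) 3 = 4/(k:ℝ)^2)
    (q p m : ℕ) (hm1 : 1 ≤ m) (hqm : q ≤ (k+1)*m) (hmp : 2*m < p) (hpq : p ≤ q) :
    4/(k:ℝ)^2 ≤ tDensity 3 q p := by
  by_contra hcon
  push_neg at hcon
  set a := tDensity 3 q p with ha
  have hkR : (0:ℝ) < (k:ℝ) := by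
    have : 0 < k := by omega
    exact_mod_cast this
  have hturpos : (0:ℝ) < 4/(k:ℝ)^2 := by positivity
  have hbdd : BddAbove (Set.range fun n : ℕ => (minEdges 3 n q p : ℝ)/(n.choose 3)) := by
    refine ⟨1, fun x hx => ?_⟩
    obtain ⟨n, rfl⟩ := hx
    show (minEdges 3 n q p : ℝ)/((n.choose 3 : ℕ) : ℝ) ≤ 1
    rcases Nat.eq_zero_or_pos (n.choose 3) with h0 | hpos
    · rw [h0]; simp
    · rw [div_le_one (by exact_mod_cast hpos)]
      exact_mod_cast minEdges_le_choose hpq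
  have hterm : ∀ n : ℕ, (minEdges 3 n q p : ℝ)/(n.choose 3) ≤ a :=
    fun n => le_ciSup hbdd n
  have hanneg : 0 ≤ a := le_trans (by positivity) (hterm 0)
  set a' := (a + 4/(k:ℝ)^2)/2 with ha'
  have haa' : a < a' := by rw [ha']; linarith
  have ha'lt : a' < 4/(k:ℝ)^2 := by rw [ha']; linarith
  have ha'pos : 0 < a' := by rw [ha']; linarith
  have hlt : a' < ⨆ n : ℕ, (minEdges 3 n (k+1) 3 : ℝ)/(n.choose 3) := by
    have : (⨆ n : ℕ, (minEdges 3 n (k+1) 3 : ℝ)/(n.choose 3)) = tDensity 3 (k+1) 3 := rfl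
    rw [this, hturan]
    exact ha'lt
  obtain ⟨N, hN⟩ := exists_lt_of_lt_ciSup hlt
  set E := minEdges 3 N (k+1) 3 with hE
  have hCN3 : 0 < N.choose 3 := by
    by_contra h0
    push_neg at h0
    have h1 : ((N.choose 3 : ℕ) : ℝ) = 0 := by
      have : N.choose 3 = 0 := by omega
      exact_mod_cast this
    rw [h1, div_zero] at hN
    linarith
  have hEbig : a' * (N.choose 3 : ℝ) < E := (lt_div_iff₀ (by exact_mod_cast hCN3)).1 hN
  have hEpos : 0 < E := by
    have h1 : (0:ℝ) < E := lt_of_le_of_lt (by positivity) hEbig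
    exact_mod_cast h1
  have hNk : k+1 ≤ N := by
    by_contra hNk'
    push_neg at hNk'
    have hempty : HasLocalProperty (∅ : Finset (Finset (Fin N))) 3 (k+1) 3 := by
      intro A hA
      exfalso
      have := Finset.card_le_univ A
      rw [Fintype.card_fin] at this
      omega
    have := minEdges_le_card (∅ : Finset (Finset (Fin N))) (by simp) hempty
    rw [Finset.card_empty] at this
    omega
  have h3N : 3 ≤ N := by omega
  set c₁ : ℝ := (a' - a) * (N.choose 3) / (E * (N.choose (k+1))) with hc₁
  have hCNk : 0 < N.choose (k+1) := Nat.choose_pos hNk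
  have hc₁pos : 0 < c₁ := by
    refine div_pos (mul_pos (by linarith) (by exact_mod_cast hCN3))
      (mul_pos (by exact_mod_cast hEpos) (by exact_mod_cast hCNk))
  set c₃ : ℝ := c₁ / (2^(k+1) * (k+1).factorial) with hc₃
  have hc₃pos : 0 < c₃ := by
    rw [hc₃]
    have : (0:ℝ) < (k+1).factorial := by exact_mod_cast Nat.factorial_pos (k+1)
    positivity
  obtain ⟨n₀, hbox⟩ := box_theorem (k+1) m c₃ hc₃pos
  set n := n₀ + N + 2*(k+1)*(m+1) + 2*k + 2 with hn
  have hNn : N ≤ n := by omega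
  have hn0 : 0 < n := by omega
  obtain ⟨G, hG3, hGprop, hGcard⟩ := exists_minimizer n q p hpq
  have hsup := sup_bound (n := n) (N := N) (k := k) hk hNk hNn G hG3
  set K : Finset (Finset (Fin n)) := (Finset.univ.powersetCard (k+1)).filter
    (fun A => ∀ B ⊆ A, B.card = 3 → B ∉ G) with hK
  -- real abbreviations
  have hn3 : 3 ≤ n := by omega
  have hC3pos : (0:ℝ) < (n.choose 3 : ℝ) := by exact_mod_cast Nat.choose_pos hn3
  have hGle : (G.card : ℝ) ≤ a * (n.choose 3) := by
    have h1 := hterm n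
    rw [← hGcard] at h1
    rw [div_le_iff₀ hC3pos] at h1
    exact h1
  have hid1 : ((n.choose N : ℕ):ℝ) * (N.choose 3 : ℝ)
      = (n.choose 3 : ℝ) * ((n-3).choose (N-3) : ℝ) := by
    exact_mod_cast congrArg (Nat.cast (R := ℝ)) (Nat.choose_mul (n := n) h3N)
  have hid2 : ((n.choose N : ℕ):ℝ) * (N.choose (k+1) : ℝ)
      = (n.choose (k+1) : ℝ) * ((n-(k+1)).choose (N-(k+1)) : ℝ) := by
    exact_mod_cast congrArg (Nat.cast (R := ℝ)) (Nat.choose_mul (n := n) hNk)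
  have hsupR : (E:ℝ) * (n.choose N) ≤ (G.card:ℝ) * ((n-3).choose (N-3))
      + (E:ℝ) * ((K.card:ℝ) * ((n-(k+1)).choose (N-(k+1)))) := by
    exact_mod_cast hsup
  have hCnNpos : (0:ℝ) < (n.choose N : ℝ) := by exact_mod_cast Nat.choose_pos hNn
  have hCqpos : (0:ℝ) < ((n-(k+1)).choose (N-(k+1)) : ℝ) := by
    exact_mod_cast Nat.choose_pos (by omega : N-(k+1) ≤ n-(k+1))
  have hCppos : (0:ℝ) ≤ ((n-3).choose (N-3) : ℝ) := by positivity
  have h1 : (a' - a) * (N.choose 3:ℝ) * (n.choose N : ℝ)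
      ≤ (E:ℝ) * ((K.card:ℝ) * ((n-(k+1)).choose (N-(k+1)) : ℝ)) := by
    have e1 : (G.card:ℝ) * ((n-3).choose (N-3):ℝ)
        ≤ a * ((n.choose 3:ℝ) * ((n-3).choose (N-3):ℝ)) := by
      calc (G.card:ℝ) * ((n-3).choose (N-3):ℝ)
          ≤ (a * (n.choose 3:ℝ)) * ((n-3).choose (N-3):ℝ) :=
            mul_le_mul_of_nonneg_right hGle hCppos
        _ = a * ((n.choose 3:ℝ) * ((n-3).choose (N-3):ℝ)) := by ring
    have e1' : (G.card:ℝ) * ((n-3).choose (N-3):ℝ)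
        ≤ a * ((n.choose N:ℝ) * (N.choose 3:ℝ)) := by
      rw [hid1]; exact e1
    have e2 : a' * (N.choose 3:ℝ) * (n.choose N:ℝ) ≤ (E:ℝ) * (n.choose N:ℝ) := by
      refine mul_le_mul_of_nonneg_right (le_of_lt hEbig) (le_of_lt hCnNpos)
    linarith [hsupR, e1', e2]
  have h2 : (a'-a) * (N.choose 3:ℝ) * (n.choose (k+1):ℝ) ≤ (E:ℝ) * (K.card:ℝ) * (N.choose (k+1):ℝ) := by
    have h2a := mul_le_mul_of_nonneg_right h1 (le_of_lt (by exact_mod_cast hCNk : (0:ℝ) < (N.choose (k+1):ℝ)))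
    have h2b : (a' - a) * (N.choose 3:ℝ) * (n.choose N : ℝ) * (N.choose (k+1):ℝ)
        = ((a'-a) * (N.choose 3:ℝ) * (n.choose (k+1):ℝ)) * ((n-(k+1)).choose (N-(k+1)) : ℝ) := by
      calc (a' - a) * (N.choose 3:ℝ) * (n.choose N : ℝ) * (N.choose (k+1):ℝ)
          = (a' - a) * (N.choose 3:ℝ) * ((n.choose N : ℝ) * (N.choose (k+1):ℝ)) := by ring
        _ = (a' - a) * (N.choose 3:ℝ) * ((n.choose (k+1) : ℝ) * ((n-(k+1)).choose (N-(k+1)) : ℝ)) := by rw [hid2]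
        _ = ((a'-a) * (N.choose 3:ℝ) * (n.choose (k+1):ℝ)) * ((n-(k+1)).choose (N-(k+1)) : ℝ) := by ring
    rw [h2b] at h2a
    have h2c : (E:ℝ) * ((K.card:ℝ) * ((n-(k+1)).choose (N-(k+1)) : ℝ)) * (N.choose (k+1):ℝ)
        = ((E:ℝ) * (K.card:ℝ) * (N.choose (k+1):ℝ)) * ((n-(k+1)).choose (N-(k+1)) : ℝ) := by ring
    rw [h2c] at h2a
    exact le_of_mul_le_mul_right h2a hCqpos
  have hKbound : c₁ * (n.choose (k+1) : ℝ) ≤ K.card := by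
    rw [hc₁, div_mul_eq_mul_div, div_le_iff₀ (mul_pos (by exact_mod_cast hEpos : (0:ℝ) < E)
      (by exact_mod_cast hCNk : (0:ℝ) < (N.choose (k+1):ℝ)))]
    linarith [h2]
  -- lower bound on K.card in terms of n^(k+1)
  have hhalf : (n:ℝ)/2 ≤ ((n - k : ℕ) : ℝ) := by
    rw [Nat.cast_sub (by omega : k ≤ n)]
    have h3 : ((2*k : ℕ):ℝ) ≤ (n:ℝ) := Nat.cast_le.2 (by omega : 2*k ≤ n)
    rw [Nat.cast_mul] at h3
    have h4 : ((2:ℕ):ℝ) = 2 := by norm_num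
    rw [h4] at h3
    linarith
  have hdescN : ((n - k : ℕ):ℝ)^(k+1) ≤ ((k+1).factorial : ℝ) * (n.choose (k+1) : ℝ) := by
    have h1 := Nat.pow_sub_le_descFactorial n (k+1)
    rw [Nat.descFactorial_eq_factorial_mul_choose] at h1
    have h2 : n + 1 - (k+1) = n - k := by omega
    rw [h2] at h1
    exact_mod_cast h1
  have hfactpos : (0:ℝ) < ((k+1).factorial : ℝ) := by exact_mod_cast (k+1).factorial_pos
  have hK2 : c₃ * (n:ℝ)^(k+1) ≤ (K.card : ℝ) := by
    have hs1 : ((n:ℝ)/2)^(k+1) ≤ ((k+1).factorial : ℝ) * (n.choose (k+1) : ℝ) :=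
      le_trans (pow_le_pow_left₀ (by positivity) hhalf (k+1)) hdescN
    have hs2 : (n:ℝ)^(k+1) ≤ (n.choose (k+1):ℝ) * (2^(k+1) * ((k+1).factorial:ℝ)) := by
      have h3 : ((n:ℝ)/2)^(k+1) * 2^(k+1)
          ≤ (((k+1).factorial:ℝ) * (n.choose (k+1):ℝ)) * 2^(k+1) :=
        mul_le_mul_of_nonneg_right hs1 (by positivity)
      have h4 : ((n:ℝ)/2)^(k+1) * 2^(k+1) = (n:ℝ)^(k+1) := by
        rw [div_pow]
        field_simp
      rw [h4] at h3
      linarith [h3]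
    calc c₃ * (n:ℝ)^(k+1) ≤ c₃ * ((n.choose (k+1):ℝ) * (2^(k+1) * ((k+1).factorial:ℝ))) :=
          mul_le_mul_of_nonneg_left hs2 (le_of_lt hc₃pos)
      _ = c₁ * (n.choose (k+1):ℝ) := by
          rw [hc₃]
          field_simp
      _ ≤ K.card := hKbound
  set dflt : Fin n := ⟨0, hn0⟩ with hdflt
  set F : Finset (Fin (k+1) → Fin n) := Finset.univ.filter
    (fun f => Function.Injective f ∧ Finset.univ.image f ∈ K) with hF
  have hFK : K.card ≤ F.card := by
    refine card_le_card_of_injOn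
      (fun A => if h : A.card = k+1 then (fun i => ((A.orderIsoOfFin h i : A) : Fin n))
        else fun _ => dflt) ?_ ?_
    · intro A hA
      have hAcard : A.card = k+1 := (mem_powersetCard.1 (mem_filter.1 hA).1).2
      simp only [dif_pos hAcard]
      refine mem_filter.2 ⟨mem_univ _,
        fun a b hab => (A.orderIsoOfFin hAcard).injective (Subtype.ext hab), ?_⟩
      rw [orderIso_image_univ A hAcard]
      exact hA
    · intro A hA B hB hAB
      simp only [Finset.mem_coe] at hA hB
      have hAcard : A.card = k+1 := (mem_powersetCard.1 (mem_filter.1 hA).1).2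
      have hBcard : B.card = k+1 := (mem_powersetCard.1 (mem_filter.1 hB).1).2
      simp only [dif_pos hAcard, dif_pos hBcard] at hAB
      have h1 : Finset.univ.image (fun i => ((A.orderIsoOfFin hAcard i : A) : Fin n))
          = Finset.univ.image (fun i => ((B.orderIsoOfFin hBcard i : B) : Fin n)) := by
        rw [hAB]
      rw [orderIso_image_univ A hAcard, orderIso_image_univ B hBcard] at h1
      exact h1
  have hFle : c₃ * (n:ℝ)^(k+1) ≤ (F.card : ℝ) :=
    le_trans hK2 (by exact_mod_cast hFK)
  obtain ⟨W, hWcard, hWmem⟩ := hbox n (by omega) F hFle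
  have hWne : ∀ i, (W i).Nonempty := fun i => card_pos.1 (by rw [hWcard i]; omega)
  have hWdisj : ∀ i j : Fin (k+1), i ≠ j → ∀ x, x ∈ W i → x ∈ W j → False := by
    intro i j hij x hxi hxj
    set f : Fin (k+1) → Fin n :=
      fun t => if t = i then x else if t = j then x else (hWne t).choose with hfdef
    have hf : ∀ t, f t ∈ W t := by
      intro t
      simp only [hfdef]
      by_cases h1 : t = i
      · subst h1; rw [if_pos rfl]; exact hxi
      · rw [if_neg h1]
        by_cases h2 : t = j
        · subst h2; rw [if_pos rfl]; exact hxj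
        · rw [if_neg h2]; exact (hWne t).choose_spec
    have hfF := hWmem f hf
    have hinj : Function.Injective f := (mem_filter.1 hfF).2.1
    have hfij : f i = f j := by
      simp only [hfdef]
      split_ifs <;> rfl
    exact hij (hinj hfij)
  have hdisj' : ∀ x ∈ (Finset.univ : Finset (Fin (k+1))), ∀ y ∈ Finset.univ,
      x ≠ y → Disjoint (W x) (W y) := by
    intro i _ j _ hij
    rw [Finset.disjoint_left]
    intro x hxi hxj
    exact hWdisj i j hij x hxi hxj
  set U := Finset.univ.biUnion W with hU
  have hUcard : U.card = (k+1)*m := by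
    rw [hU, Finset.card_biUnion hdisj', Finset.sum_congr rfl (fun i _ => hWcard i),
      Finset.sum_const, smul_eq_mul, card_univ, Fintype.card_fin]
  obtain ⟨A, hAU, hAcard⟩ := exists_subset_card_eq (s := U) (n := q) (by rw [hUcard]; exact hqm)
  obtain ⟨B, hBA, hBcard, hBedge⟩ := hGprop A hAcard
  set I := Finset.univ.filter (fun i : Fin (k+1) => (B ∩ W i).Nonempty) with hI
  rcases le_or_gt I.card 2 with hIle | hIgt
  · have hBsub : B ⊆ I.biUnion W := by
      intro b hb
      have hbU : b ∈ U := hAU (hBA hb)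
      rw [hU] at hbU
      obtain ⟨i, _, hbi⟩ := mem_biUnion.1 hbU
      refine mem_biUnion.2 ⟨i, ?_, hbi⟩
      rw [hI, mem_filter]
      exact ⟨mem_univ _, ⟨b, mem_inter.2 ⟨hb, hbi⟩⟩⟩
    have hsmall : B.card ≤ 2*m := by
      calc B.card ≤ (I.biUnion W).card := card_le_card hBsub
        _ ≤ ∑ i ∈ I, (W i).card := card_biUnion_le
        _ = I.card * m := by
            rw [Finset.sum_congr rfl (fun i _ => hWcard i), Finset.sum_const, smul_eq_mul]
        _ ≤ 2*m := Nat.mul_le_mul_right m hIle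
    omega
  · obtain ⟨J, hJI, hJcard⟩ := exists_subset_card_eq (s := I) (show 3 ≤ I.card by omega)
    obtain ⟨i, j, l, hij, hil, hjl, hJ⟩ := Finset.card_eq_three.1 hJcard
    have hiI : i ∈ I := hJI (by rw [hJ]; exact mem_insert_self _ _)
    have hjI : j ∈ I := hJI (by rw [hJ]; exact mem_insert_of_mem (mem_insert_self _ _))
    have hlI : l ∈ I := hJI (by
      rw [hJ]; exact mem_insert_of_mem (mem_insert_of_mem (mem_singleton_self _)))
    rw [hI, mem_filter] at hiI hjI hlI
    obtain ⟨x, hx⟩ := hiI.2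
    obtain ⟨y, hy⟩ := hjI.2
    obtain ⟨z, hz⟩ := hlI.2
    have hxB := (mem_inter.1 hx).1
    have hxW := (mem_inter.1 hx).2
    have hyB := (mem_inter.1 hy).1
    have hyW := (mem_inter.1 hy).2
    have hzB := (mem_inter.1 hz).1
    have hzW := (mem_inter.1 hz).2
    have hxy : x ≠ y := fun h => hWdisj i j hij x hxW (h ▸ hyW)
    have hxz : x ≠ z := fun h => hWdisj i l hil x hxW (h ▸ hzW)
    have hyz : y ≠ z := fun h => hWdisj j l hjl y hyW (h ▸ hzW)
    set e : Finset (Fin n) := {x, y, z} with he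
    have hecard : e.card = 3 := Finset.card_eq_three.2 ⟨x, y, z, hxy, hxz, hyz, rfl⟩
    have heB : e ⊆ B := by
      intro w hw
      rw [he] at hw
      rcases mem_insert.1 hw with rfl | hw'
      · exact hxB
      rcases mem_insert.1 hw' with rfl | hw''
      · exact hyB
      · rw [mem_singleton.1 hw'']; exact hzB
    have heG : e ∈ G := hBedge e heB hecard
    set f : Fin (k+1) → Fin n := fun t => if t = i then x else if t = j then y
      else if t = l then z else (hWne t).choose with hfdef
    have hf : ∀ t, f t ∈ W t := by
      intro t
      simp only [hfdef]
      by_cases h1 : t = i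
      · subst h1; rw [if_pos rfl]; exact hxW
      · rw [if_neg h1]
        by_cases h2 : t = j
        · subst h2; rw [if_pos rfl]; exact hyW
        · rw [if_neg h2]
          by_cases h3 : t = l
          · subst h3; rw [if_pos rfl]; exact hzW
          · rw [if_neg h3]; exact (hWne t).choose_spec
    have hfF := hWmem f hf
    have hKmem : Finset.univ.image f ∈ K := (mem_filter.1 hfF).2.2
    rw [hK, mem_filter] at hKmem
    have hesub : e ⊆ Finset.univ.image f := by
      intro w hw
      rw [he] at hw
      rcases mem_insert.1 hw with rfl | hw'
      · refine mem_image.2 ⟨i, mem_univ _, ?_⟩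
        simp [hfdef]
      rcases mem_insert.1 hw' with rfl | hw''
      · refine mem_image.2 ⟨j, mem_univ _, ?_⟩
        simp [hfdef, Ne.symm hij]
      · rw [mem_singleton.1 hw'']
        refine mem_image.2 ⟨l, mem_univ _, ?_⟩
        simp [hfdef, Ne.symm hil, Ne.symm hjl]
    exact (hKmem.2 e hesub hecard) heG


/-- Assuming Turán's conjecture t_3(k+1,3) = 4/k², for every 1 ≤ γ < (k+1)/2,
liminf_{q→∞} t_3(q,⌈q/γ⌉) ≥ 4/k². -/
theorem liminf_local_turan_density_of_turan (k : ℕ) (hk : 2 ≤ k)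
    (hturan : tDensity 3 (k+1) 3 = 4 / (k : ℝ)^2)
    (γ : ℝ) (hγ1 : 1 ≤ γ) (hγ2 : γ < ((k : ℝ) + 1) / 2) :
    4 / (k : ℝ)^2 ≤ liminf (fun q : ℕ => tDensity 3 q ⌈(q : ℝ) / γ⌉₊) atTop := by
  have hγpos : (0:ℝ) < γ := lt_of_lt_of_le one_pos hγ1
  have hk1pos : (0:ℝ) < (k:ℝ) + 1 := by positivity
  have hpq : ∀ q : ℕ, ⌈(q : ℝ) / γ⌉₊ ≤ q := by
    intro q
    rw [Nat.ceil_le]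
    calc (q:ℝ)/γ ≤ (q:ℝ)/1 := by
          refine div_le_div_of_nonneg_left (by positivity) (by norm_num) hγ1
      _ = (q:ℝ) := by norm_num
  -- eventual lower bound
  have hε₀pos : 0 < 1/γ - 2/((k:ℝ)+1) := by
    rw [sub_pos, div_lt_div_iff₀ hk1pos hγpos]
    linarith
  have hev : ∀ᶠ q in atTop, 4/(k:ℝ)^2 ≤ tDensity 3 q ⌈(q : ℝ) / γ⌉₊ := by
    rw [eventually_atTop]
    refine ⟨⌈3/(1/γ - 2/((k:ℝ)+1))⌉₊ + 1, fun q hq => ?_⟩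
    have hq1 : 1 ≤ q := by omega
    have hqe : 3/(1/γ - 2/((k:ℝ)+1)) ≤ (q:ℝ) := by
      calc 3/(1/γ - 2/((k:ℝ)+1)) ≤ (⌈3/(1/γ - 2/((k:ℝ)+1))⌉₊ : ℝ) := Nat.le_ceil _
        _ ≤ q := by exact_mod_cast (by omega : ⌈3/(1/γ - 2/((k:ℝ)+1))⌉₊ ≤ q)
    have hqε : 3 ≤ (q:ℝ) * (1/γ - 2/((k:ℝ)+1)) := by
      rw [div_le_iff₀ hε₀pos] at hqe
      linarith
    set p := ⌈(q : ℝ) / γ⌉₊ with hp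
    set m := ⌈(q : ℝ) / ((k:ℝ)+1)⌉₊ with hm
    have hm1 : 1 ≤ m := by
      rw [hm]
      refine Nat.one_le_ceil_iff.2 ?_
      have : (0:ℝ) < (q:ℝ) := by exact_mod_cast hq1
      positivity
    have hqm : q ≤ (k+1)*m := by
      have h1 : (q:ℝ)/((k:ℝ)+1) ≤ (m:ℝ) := Nat.le_ceil _
      have h2 : (q:ℝ) ≤ ((k:ℝ)+1) * m := by
        rw [div_le_iff₀ hk1pos] at h1
        linarith
      have h3 : (q:ℝ) ≤ (((k+1)*m : ℕ) : ℝ) := by push_cast; linarith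
      exact_mod_cast h3
    have hmp : 2*m < p := by
      have h1 : (m:ℝ) < (q:ℝ)/((k:ℝ)+1) + 1 := Nat.ceil_lt_add_one (by positivity)
      have h2 : (q:ℝ)/γ ≤ (p:ℝ) := Nat.le_ceil _
      have h3 : 2*((q:ℝ)/((k:ℝ)+1)) + 3 ≤ (q:ℝ)/γ := by
        have e1 : (q:ℝ)/γ - 2*((q:ℝ)/((k:ℝ)+1)) = (q:ℝ) * (1/γ - 2/((k:ℝ)+1)) := by
          field_simp
        linarith [hqε, e1]
      have h4 : (2*m : ℝ) < (p:ℝ) := by linarith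
      exact_mod_cast h4
    exact perq k hk hturan q p m hm1 hqm hmp (hpq q)
  -- coboundedness
  have hbound : ∀ q : ℕ, tDensity 3 q ⌈(q : ℝ) / γ⌉₊ ≤ 1 := by
    intro q
    refine ciSup_le fun n => ?_
    rcases Nat.eq_zero_or_pos (n.choose 3) with h0 | hpos
    · rw [h0]; simp
    · rw [div_le_one (by exact_mod_cast hpos)]
      exact_mod_cast minEdges_le_choose (hpq q)
  have hcob : Filter.IsCoboundedUnder (· ≥ ·) atTop
      (fun q : ℕ => tDensity 3 q ⌈(q : ℝ) / γ⌉₊) :=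
    Filter.isCoboundedUnder_ge_of_le atTop (x := 1) hbound
  exact Filter.le_liminf_of_le hcob hev
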